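/- Directly applying the Top Trading Cycle algorithm to a barter exchange network is not individually rational. Concretely: consider the line network with organizer o and agents 1,2,3, with edges o–1, 1–2, 2–3, where each agent i owns good g_i, and the preferences are g3 ≻₁ g2 ≻₁ g1 for agent 1, g1 ≻₂ g3 ≻₂ g2 for agent 2, and g1 ≻₃ g2 ≻₃ g3 for agent 3. When all three agents participate, TTC gives agent 2 her own good g2. If instead agent 2 does not join the market and exchanges only within her descendant set D₂ = {2,3} (preferences restricted to {g2,g3}), then agents 2 and 3 trade and agent 2 receives g3, which she strictly prefers to g2. Hence participating in the market makes agent 2 strictly worse off. -/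

import Mathlib

/-!
STATEMENT 1: Directly applying TTC to a barter exchange network is not
individually rational, witnessed by the line network o – 1 – 2 – 3.

Vertices are `Fin 4` with organizer `o = 0` and agents `1, 2, 3`; good `g_i`
is identified with its owner `i`.  Preferences are encoded by a rank function
(`rank i g` smaller means agent `i` prefers good `g` more).
-/

/-- `Desc G o i`: the descendants of `i` (including `i`): vertices `v` such that
every path in `G` from the organizer `o` to `v` passes through `i`. -/
def Desc {V : Type*} (G : SimpleGraph V) (o i : V) : Set V :=
  {v | ∀ p : G.Walk o v, p.IsPath → i ∈ p.support}

/-- `IsTTCOutcome agents avail rank μ` : `μ` is the matching produced by some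
execution of the Top Trading Cycle algorithm on the set `agents` (goods being
identified with their owners), where agent `i` may only point to goods in
`avail i`, and `rank i g` is the position of good `g` in `i`'s strict
preference order (smaller = more preferred).  The witness `round i` records
the round in which agent `i`'s cycle is removed: members of one trading cycle
leave in the same round, each agent receives a good she is allowed to point
to, and her good is her most preferred among the goods of agents still
remaining in her round. -/
def IsTTCOutcome {V : Type*} (agents : Set V) (avail : V → Set V)
    (rank : V → V → ℕ) (μ : V → V) : Prop :=
  ∃ round : V → ℕ,
    Set.MapsTo μ agents agents ∧
    Set.InjOn μ agents ∧
    (∀ i ∈ agents, μ i ∈ avail i) ∧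
    (∀ i ∈ agents, round (μ i) = round i) ∧
    (∀ i ∈ agents, ∀ j ∈ agents, j ∈ avail i → round i ≤ round j →
      rank i (μ i) ≤ rank i j)

/-- The line network `o = 0 – 1 – 2 – 3`. -/
def lineG : SimpleGraph (Fin 4) where
  Adj x y := x.val + 1 = y.val ∨ y.val + 1 = x.val
  symm := ⟨by intro x y h; tauto⟩
  loopless := ⟨by intro x h; omega⟩

/-- Preferences: `g3 ≻₁ g2 ≻₁ g1`, `g1 ≻₂ g3 ≻₂ g2`, `g1 ≻₃ g2 ≻₃ g3`
(the `0`-entries are dummies for the organizer, who owns no good). -/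
def rk : Fin 4 → Fin 4 → ℕ :=
  ![![0, 0, 0, 0], ![9, 2, 1, 0], ![9, 0, 2, 1], ![9, 0, 1, 2]]

/-!
In the full market the top choices are `1 → g3`, `2 → g1`, `3 → g1`. The agents removed in the
first TTC round form a set closed under pointing, so it contains the cycle `1 ↔ 3`; agents 1 and 3
swap and agent 2 is left with her own good. Inside `D₂ = {2, 3}` agents 2 and 3 point at each
other and swap.
-/

theorem lineG_mem_support_of_le_of_le {u v w : Fin 4} (p : lineG.Walk u v) (huw : u ≤ w)
    (hwv : w ≤ v) : w ∈ p.support := by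
  induction p with
  | nil => simp [le_antisymm huw hwv]
  | @cons a b _ hab _ ih =>
    rcases eq_or_ne a w with rfl | haw
    · simp
    · have hab : a.val + 1 = b.val ∨ b.val + 1 = a.val := hab
      have hbw : b ≤ w := by rw [Fin.le_iff_val_le_val] at huw ⊢; omega
      simp [ih hbw hwv]

theorem desc_lineG_zero_two : Desc lineG 0 2 = {2, 3} := by
  ext v
  constructor
  · intro hv
    fin_cases v
    · simpa using hv .nil .nil
    · have h01 : lineG.Adj 0 1 := Or.inl rfl
      simpa using hv (.cons h01 .nil) (by simp)
    all_goals simp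
  · rintro (rfl | rfl) p -
    · exact p.end_mem_support
    · exact lineG_mem_support_of_le_of_le p (by decide) (by decide)

def IsTopChoice {V : Type*} (agents : Set V) (avail : V → Set V) (rank : V → V → ℕ)
    (i g : V) : Prop :=
  g ∈ agents ∧ g ∈ avail i ∧ ∀ j ∈ agents, j ∈ avail i → rank i g ≤ rank i j

namespace IsTTCOutcome

variable {V : Type*} {agents : Set V} {avail : V → Set V} {rank : V → V → ℕ} {μ : V → V}

theorem mapsTo (h : IsTTCOutcome agents avail rank μ) : Set.MapsTo μ agents agents :=
  h.choose_spec.1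

theorem injOn (h : IsTTCOutcome agents avail rank μ) : Set.InjOn μ agents :=
  h.choose_spec.2.1

/-- `S` is the set of agents removed in the earliest round. -/
theorem exists_firstRound (h : IsTTCOutcome agents avail rank μ) (hne : agents.Nonempty)
    {top : V → V}
    (htop : ∀ i ∈ agents, ∀ g, IsTopChoice agents avail rank i g → g = top i) :
    ∃ S ⊆ agents, S.Nonempty ∧ Set.MapsTo top S S ∧ Set.EqOn μ top S := by
  obtain ⟨round, hmap, -, havail, hround, hbest⟩ := h
  obtain ⟨i₀, hi₀, hround_i₀⟩ : sInf (round '' agents) ∈ round '' agents :=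
    Nat.sInf_mem (hne.image round)
  have hfirst : ∀ i ∈ agents, round i = round i₀ → μ i = top i := fun i hi hi₀ =>
    htop i hi (μ i) ⟨hmap hi, havail i hi, fun j hj hji =>
      hbest i hi j hj hji (hi₀ ▸ hround_i₀ ▸ Nat.sInf_le (Set.mem_image_of_mem round hj))⟩
  refine ⟨{i ∈ agents | round i = round i₀}, fun i hi => hi.1, ⟨i₀, hi₀, rfl⟩, ?_,
    fun i hi => hfirst i hi.1 hi.2⟩
  intro i hi
  rw [← hfirst i hi.1 hi.2]
  exact ⟨hmap hi.1, (hround i hi.1).trans hi.2⟩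

end IsTTCOutcome

theorem eq_of_isTopChoice_full {i g : Fin 4} (hi : i ∈ ({1, 2, 3} : Set (Fin 4)))
    (hg : IsTopChoice {1, 2, 3} (fun _ => {1, 2, 3}) rk i g) : g = ![0, 3, 1, 1] i := by
  revert i g; unfold IsTopChoice; decide

theorem eq_of_isTopChoice_desc {i g : Fin 4} (hi : i ∈ ({2, 3} : Set (Fin 4)))
    (hg : IsTopChoice {2, 3} (fun _ => {2, 3}) rk i g) : g = ![0, 0, 3, 2] i := by
  revert i g; unfold IsTopChoice; decide

/-- The actual TTC run: the cycle `1 ↔ 3` leaves in round 0, agent 2 alone in round 1. -/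
theorem isTTCOutcome_full : IsTTCOutcome {1, 2, 3} (fun _ => {1, 2, 3}) rk ![0, 3, 2, 1] :=
  ⟨![0, 0, 1, 0], by simp only [← Finset.coe_insert, ← Finset.coe_singleton]; decide⟩

theorem isTTCOutcome_desc : IsTTCOutcome {2, 3} (fun _ => {2, 3}) rk ![0, 0, 3, 2] :=
  ⟨0, by simp only [← Finset.coe_insert, ← Finset.coe_singleton]; decide⟩

theorem IsTTCOutcome.apply_two_eq_two_full {μ : Fin 4 → Fin 4}
    (h : IsTTCOutcome {1, 2, 3} (fun _ => {1, 2, 3}) rk μ) : μ 2 = 2 := by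
  obtain ⟨S, hSagents, ⟨i, hi⟩, hStop, hμS⟩ :=
    h.exists_firstRound ⟨1, by simp⟩ fun _ hi _ => eq_of_isTopChoice_full hi
  have h13 : 1 ∈ S ∧ 3 ∈ S := by
    rcases hSagents hi with rfl | rfl | rfl
    · exact ⟨hi, hStop hi⟩
    · exact ⟨hStop hi, hStop (hStop hi)⟩
    · exact ⟨hStop hi, hi⟩
  have hμ1 : μ 1 = 3 := hμS h13.1
  have hμ3 : μ 3 = 1 := hμS h13.2
  rcases h.mapsTo (show (2 : Fin 4) ∈ {1, 2, 3} by simp) with h2 | h2 | h2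
  · exact absurd (h.injOn (by simp) (by simp) (h2.trans hμ3.symm)) (by decide)
  · exact h2
  · exact absurd (h.injOn (by simp) (by simp) (h2.trans hμ1.symm)) (by decide)

theorem IsTTCOutcome.swap_desc {μ : Fin 4 → Fin 4}
    (h : IsTTCOutcome {2, 3} (fun _ => {2, 3}) rk μ) : μ 2 = 3 ∧ μ 3 = 2 := by
  obtain ⟨S, hSagents, ⟨i, hi⟩, hStop, hμS⟩ :=
    h.exists_firstRound ⟨2, by simp⟩ fun _ hi _ => eq_of_isTopChoice_desc hi
  have h23 : 2 ∈ S ∧ 3 ∈ S := by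
    rcases hSagents hi with rfl | rfl
    · exact ⟨hi, hStop hi⟩
    · exact ⟨hStop hi, hi⟩
  exact ⟨hμS h23.1, hμS h23.2⟩

/-- TTC in social networks is not individually rational:
the descendant set of agent `2` is `D₂ = {2, 3}`; when all of `1,2,3`
participate, every TTC execution leaves agent `2` with her own good `g2`;
but exchanging only within `D₂ = {2,3}` (preferences restricted to
`{g2, g3}`), every TTC execution trades `g2 ↔ g3`, giving agent `2` the good
`g3`, which she strictly prefers to `g2`.  Hence participating in the market
makes agent `2` strictly worse off. -/
theorem ttc_in_networks_not_IR :
    -- the descendant set of agent 2 in the line network is {2, 3}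
    Desc lineG 0 2 = ({2, 3} : Set (Fin 4)) ∧
    -- full market {1,2,3}: TTC outcomes exist and each gives agent 2 her own good
    (∃ μ : Fin 4 → Fin 4,
      IsTTCOutcome ({1, 2, 3} : Set (Fin 4)) (fun _ => {1, 2, 3}) rk μ) ∧
    (∀ μ : Fin 4 → Fin 4,
      IsTTCOutcome ({1, 2, 3} : Set (Fin 4)) (fun _ => {1, 2, 3}) rk μ →
        μ 2 = 2) ∧
    -- trading only inside D₂ = {2,3}: TTC outcomes exist and in each of
    -- them agents 2 and 3 exchange their goods
    (∃ μ : Fin 4 → Fin 4,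
      IsTTCOutcome ({2, 3} : Set (Fin 4)) (fun _ => {2, 3}) rk μ) ∧
    (∀ μ : Fin 4 → Fin 4,
      IsTTCOutcome ({2, 3} : Set (Fin 4)) (fun _ => {2, 3}) rk μ →
        μ 2 = 3 ∧ μ 3 = 2) ∧
    -- agent 2 strictly prefers g3 to g2
    rk 2 3 < rk 2 2 := by
  exact ⟨desc_lineG_zero_two, ⟨_, isTTCOutcome_full⟩,
    fun _ => IsTTCOutcome.apply_two_eq_two_full, ⟨_, isTTCOutcome_desc⟩,
    fun _ => IsTTCOutcome.swap_desc, by decide⟩
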